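/- For every graph G ∈ G_xy, g^+(G) ≤ g_a(G) + 1. (Consequently the parameters g_a and g^+ are 1-separated, by ε + θ.) -/

import Mathlib

open scoped Classical

/-- A finite simple graph with vertex labels in `ℕ`. -/
structure FinGraph where
  verts : Finset ℕ
  edges : Finset (Sym2 ℕ)
  edge_sub : ∀ e ∈ edges, ∀ v ∈ e, v ∈ verts
  loopless : ∀ e ∈ edges, ¬ e.IsDiag

namespace FinGraph

/-- Adjacency. -/
def Adj (G : FinGraph) (u v : ℕ) : Prop := s(u, v) ∈ G.edges

/-- Reachability by walks. -/
def Reach (G : FinGraph) : ℕ → ℕ → Prop := Relation.ReflTransGen G.Adj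

/-- A graph is connected if it is nonempty and every two vertices are joined by a walk. -/
def Connected (G : FinGraph) : Prop :=
  G.verts.Nonempty ∧ ∀ u ∈ G.verts, ∀ v ∈ G.verts, G.Reach u v

/-- Number of connected components. -/
noncomputable def compCount (G : FinGraph) : ℕ :=
  Set.ncard {S : Set ℕ | ∃ v ∈ G.verts, S = {u | G.Reach v u}}

/-- Darts (directed edges). -/
def darts (G : FinGraph) : Set (ℕ × ℕ) := {p | s(p.1, p.2) ∈ G.edges}

/-- Number of isolated vertices. -/
noncomputable def isolCount (G : FinGraph) : ℕ :=
  (G.verts.filter (fun v => ∀ e ∈ G.edges, v ∉ e)).card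

end FinGraph

/-- An orientable combinatorial embedding of `G`, given by a rotation system:
a permutation of the darts that fixes sources and is a single cycle on the darts
leaving each vertex (the local rotation). -/
structure Rot (G : FinGraph) where
  r : ℕ × ℕ → ℕ × ℕ
  bij : Set.BijOn r G.darts G.darts
  fix : ∀ d ∈ G.darts, (r d).1 = d.1
  cyc : ∀ d ∈ G.darts, ∀ d' ∈ G.darts, d.1 = d'.1 → ∃ n : ℕ, r^[n] d = d'

/-- The face-tracing map: follow an edge, then turn by the rotation. -/
def faceMap {G : FinGraph} (R : Rot G) : ℕ × ℕ → ℕ × ℕ := fun d => R.r (d.2, d.1)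

/-- The number of faces of an embedding: orbits of the face-tracing map together with
one face for each isolated vertex. -/
noncomputable def faceCount {G : FinGraph} (R : Rot G) : ℕ :=
  Set.ncard {S : Set (ℕ × ℕ) | ∃ d ∈ G.darts, S = {d' | ∃ n : ℕ, (faceMap R)^[n] d = d'}}
    + G.isolCount

/-- Twice the genus of the embedding `R`, by the Euler formula `2g = 2c - n + m - f`
(summed over the `c` connected components). -/
noncomputable def eulerVal (G : FinGraph) (R : Rot G) : ℤ :=
  2 * G.compCount - G.verts.card + G.edges.card - faceCount R

/-- The (orientable) genus of a graph: minimum genus of an embedding. -/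
noncomputable def FinGraph.genus (G : FinGraph) : ℕ :=
  sInf {k : ℕ | ∃ R : Rot G, 2 * (k : ℤ) = eulerVal G R}

/-- A minor-operation: an (ordered) edge together with a flag,
`false` = deletion, `true` = contraction (of the second vertex into the first). -/
abbrev Op := (ℕ × ℕ) × Bool

namespace FinGraph

/-- Deletion of the edge `ab`. -/
def del (G : FinGraph) (a b : ℕ) : FinGraph where
  verts := G.verts
  edges := G.edges.erase s(a, b)
  edge_sub := fun e he => G.edge_sub e (Finset.mem_of_mem_erase he)
  loopless := fun e he => G.loopless e (Finset.mem_of_mem_erase he)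

/-- Contraction of the edge `ab`: the vertex `b` is identified with `a`
(arising multiple edges are simplified, loops are discarded). -/
def con (G : FinGraph) (a b : ℕ) : FinGraph where
  verts := insert a (G.verts.erase b)
  edges := (G.edges.image (Sym2.map (fun w => if w = b then a else w))).filter
      (fun e => ¬ e.IsDiag)
  edge_sub := by
    intro e he v hv
    rcases Finset.mem_image.mp (Finset.mem_filter.mp he).1 with ⟨e0, he0, rfl⟩
    rcases Sym2.mem_map.mp hv with ⟨w, hw, hwv⟩
    by_cases hwb : w = b
    · simp only [hwb, if_pos rfl] at hwv
      exact hwv ▸ Finset.mem_insert_self _ _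
    · simp only [if_neg hwb] at hwv
      exact hwv ▸ Finset.mem_insert_of_mem
        (Finset.mem_erase.mpr ⟨hwb, G.edge_sub e0 he0 w hw⟩)
  loopless := fun e he => (Finset.mem_filter.mp he).2

/-- Applying a minor-operation to a graph. -/
def apply (G : FinGraph) (μ : Op) : FinGraph :=
  bif μ.2 then G.con μ.1.1 μ.1.2 else G.del μ.1.1 μ.1.2

/-- The set of minor-operations available for a graph (without terminals). -/
def ops (G : FinGraph) : Set Op := {μ | s(μ.1.1, μ.1.2) ∈ G.edges}

/-- `G` is minor-tight on a set `E0` of its edges if every minor-operation on an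
edge of `E0` decreases the genus of `G`. -/
def MinorTightOn (G : FinGraph) (E0 : Finset (Sym2 ℕ)) : Prop :=
  ∀ μ ∈ G.ops, s(μ.1.1, μ.1.2) ∈ E0 → (G.apply μ).genus < G.genus

/-- One minor-operation step, from `G` to `H`. -/
def StepTo (G H : FinGraph) : Prop := ∃ μ ∈ G.ops, H = G.apply μ

/-- `H` is a minor of `G`: it is obtained from `G` by a sequence of minor-operations. -/
def IsMinorOf (H G : FinGraph) : Prop := Relation.ReflTransGen StepTo G H

/-- `H` is a proper minor of `G`. -/
def IsProperMinorOf (H G : FinGraph) : Prop := Relation.TransGen StepTo G H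

/-- Subgraph relation. -/
def IsSubgraphOf (H G : FinGraph) : Prop := H.verts ⊆ G.verts ∧ H.edges ⊆ G.edges

/-- Deletion of a set of vertices (with all incident edges). -/
noncomputable def delVerts (G : FinGraph) (S : Finset ℕ) : FinGraph where
  verts := G.verts \ S
  edges := G.edges.filter (fun e => ∀ v ∈ e, v ∉ S)
  edge_sub := by
    intro e he v hv
    rcases Finset.mem_filter.mp he with ⟨he0, hS⟩
    exact Finset.mem_sdiff.mpr ⟨G.edge_sub e he0 v hv, hS v hv⟩
  loopless := fun e he => G.loopless e (Finset.mem_filter.mp he).1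

/-- `G` is `k`-connected. -/
def KConnected (G : FinGraph) (k : ℕ) : Prop :=
  k < G.verts.card ∧ ∀ S : Finset ℕ, S ⊆ G.verts → S.card < k → (G.delVerts S).Connected

end FinGraph

/-- `G` is an obstruction for the orientable surface `S_k`:
`g(G) = k+1` and every proper minor of `G` has genus at most `k`. -/
def IsObstruction (G : FinGraph) (k : ℕ) : Prop :=
  G.genus = k + 1 ∧ ∀ H : FinGraph, H.IsProperMinorOf G → H.genus ≤ k

/-- A graph with two distinct terminals `x` and `y` (the class `G_xy`). -/
structure TGraph where
  G : FinGraph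
  x : ℕ
  y : ℕ
  hx : x ∈ G.verts
  hy : y ∈ G.verts
  hxy : x ≠ y

namespace TGraph

/-- `G` has no edge `xy` (i.e. `G ∈ G°_xy`). -/
def NoXY (G : TGraph) : Prop := s(G.x, G.y) ∉ G.G.edges

/-- `G` has the edge `xy`. -/
def HasXY (G : TGraph) : Prop := s(G.x, G.y) ∈ G.G.edges

/-- `G⁺`: `G` together with the edge `xy`. -/
def plus (G : TGraph) : TGraph where
  G := { verts := G.G.verts
         edges := insert s(G.x, G.y) G.G.edges
         edge_sub := by
           intro e he v hv
           rcases Finset.mem_insert.mp he with h | h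
           · subst h
             rcases Sym2.mem_iff.mp hv with rfl | rfl
             · exact G.hx
             · exact G.hy
           · exact G.G.edge_sub e h v hv
         loopless := by
           intro e he
           rcases Finset.mem_insert.mp he with h | h
           · subst h
             simpa [Sym2.mk_isDiag_iff] using G.hxy
           · exact G.G.loopless e h }
  x := G.x
  y := G.y
  hx := G.hx
  hy := G.hy
  hxy := G.hxy

/-- The set of minor-operations available for a graph with terminals: the edge `xy`
may not be contracted, and a contraction never contracts a terminal into a
non-terminal (the contracted vertex `μ.1.2` is not a terminal). -/
def ops (G : TGraph) : Set Op :=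
  {μ | s(μ.1.1, μ.1.2) ∈ G.G.edges ∧ (μ.2 = true → μ.1.2 ≠ G.x ∧ μ.1.2 ≠ G.y)}

/-- Applying a minor-operation to a graph with terminals. -/
noncomputable def apply (G : TGraph) (μ : Op) : TGraph :=
  if h : μ.2 = true → μ.1.2 ≠ G.x ∧ μ.1.2 ≠ G.y then
    { G := G.G.apply μ
      x := G.x
      y := G.y
      hx := by
        cases hb : μ.2 with
        | false => simpa [FinGraph.apply, hb, FinGraph.del] using G.hx
        | true =>
            simp only [FinGraph.apply, hb, cond_true, FinGraph.con]
            exact Finset.mem_insert_of_mem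
              (Finset.mem_erase.mpr ⟨fun hc => (h hb).1 hc.symm, G.hx⟩)
      hy := by
        cases hb : μ.2 with
        | false => simpa [FinGraph.apply, hb, FinGraph.del] using G.hy
        | true =>
            simp only [FinGraph.apply, hb, cond_true, FinGraph.con]
            exact Finset.mem_insert_of_mem
              (Finset.mem_erase.mpr ⟨fun hc => (h hb).2 hc.symm, G.hy⟩)
      hxy := G.hxy }
  else G

/-- One minor-operation step (for graphs with terminals). -/
def StepTo (G H : TGraph) : Prop := ∃ μ ∈ G.ops, H = G.apply μ

/-- `H` is a minor of `G` in `G_xy`. -/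
def IsMinorOf (H G : TGraph) : Prop := Relation.ReflTransGen StepTo G H

end TGraph

/-- The graph parameter `g`: the genus. -/
noncomputable def gP (G : TGraph) : ℤ := G.G.genus

/-- The graph parameter `g⁺`: the genus of `G⁺`. -/
noncomputable def gpP (G : TGraph) : ℤ := G.plus.G.genus

/-- The embedding `R` of `G` is `xy`-alternating: some face contains
`(x, y, x, y)` as a cyclic subsequence. -/
def IsAlt (G : TGraph) (R : Rot G.G) : Prop :=
  ∃ d ∈ G.G.darts, d.1 = G.x ∧ ∃ i j k : ℕ,
    0 < i ∧ i < j ∧ j < k ∧ k < Function.minimalPeriod (faceMap R) d ∧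
    ((faceMap R)^[i] d).1 = G.y ∧ ((faceMap R)^[j] d).1 = G.x ∧
    ((faceMap R)^[k] d).1 = G.y

/-- `G` is `xy`-alternating: it has an `xy`-alternating minimum genus embedding. -/
def IsXYAlt (G : TGraph) : Prop :=
  ∃ R : Rot G.G, 2 * (G.G.genus : ℤ) = eulerVal G.G R ∧ IsAlt G R

/-- The parameter `ε`. -/
noncomputable def epsP (G : TGraph) : ℤ := if IsXYAlt G then 1 else 0

/-- The parameter `ε⁺`, `ε⁺(G) = ε(G⁺)`. -/
noncomputable def epspP (G : TGraph) : ℤ := epsP G.plus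

/-- The alternating genus `g_a = g - ε`. -/
noncomputable def gaP (G : TGraph) : ℤ := gP G - epsP G

/-- The parameter `g_a⁺ = g⁺ - ε⁺`. -/
noncomputable def gapP (G : TGraph) : ℤ := gpP G - epspP G

/-- The parameter `θ = g⁺ - g`. -/
noncomputable def thetaP (G : TGraph) : ℤ := gpP G - gP G

/-- The parameter `η(G₁,G₂) = θ(G₁) + θ(G₂) - ε⁺(G₁)ε⁺(G₂)`. -/
noncomputable def etaP (G1 G2 : TGraph) : ℤ :=
  thetaP G1 + thetaP G2 - epspP G1 * epspP G2

/-- `↓k(P, G)`: the set of minor-operations that decrease the parameter `P` by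
at least `k`. -/
noncomputable def decSet (P : TGraph → ℤ) (k : ℤ) (G : TGraph) : Set Op :=
  {μ | μ ∈ G.ops ∧ P (G.apply μ) ≤ P G - k}

/-- The critical class `C(P)`: graphs all of whose minor-operations decrease `P`. -/
noncomputable def crit (P : TGraph → ℤ) : Set TGraph :=
  {G | G.ops = decSet P 1 G}

/-- The critical class `C°(P)`: members of `C(P)` without the edge `xy`. -/
noncomputable def critO (P : TGraph → ℤ) : Set TGraph :=
  {G | G.NoXY ∧ G.ops = decSet P 1 G}

/-- `C_k(P)`: members `G` of `C(P)` with `P(G) = k + 1`. -/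
noncomputable def critk (P : TGraph → ℤ) (k : ℕ) : Set TGraph :=
  {G | G ∈ crit P ∧ P G = k + 1}

/-- `C°_k(P)`: members `G` of `C°(P)` with `P(G) = k + 1`. -/
noncomputable def critOk (P : TGraph → ℤ) (k : ℕ) : Set TGraph :=
  {G | G ∈ critO P ∧ P G = k + 1}

/-- Hoppers of level 0. -/
noncomputable def hopper0 : Set TGraph :=
  {G | G.NoXY ∧ G.ops = decSet gP 1 G ∪ decSet gapP 2 G ∧ G ∉ critO gP}

/-- Hoppers of level 1. -/
noncomputable def hopper1 : Set TGraph :=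
  {G | G.NoXY ∧ G.ops = decSet gapP 1 G ∪ decSet gP 2 G ∧ G ∉ critO gapP}

/-- `b = s(a,b)` is a bar of the dumbbell `G`: a cut-edge whose deletion separates
the terminals. -/
def IsDumbbellBar (G : TGraph) (a b : ℕ) : Prop :=
  s(a, b) ∈ G.G.edges ∧ ¬ (G.G.del a b).Reach G.x G.y

/-- A dumbbell: a graph in `G°_xy` with a cut-edge separating the two terminals. -/
def IsDumbbell (G : TGraph) : Prop := G.NoXY ∧ ∃ a b : ℕ, IsDumbbellBar G a b

/-- The class `D` of dumbbells `G` with a bar `b` such that `θ(G) = 0`, every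
minor-operation other than those on the bar decreases `g`, and `ε⁺(G/b) = 1`. -/
noncomputable def classD : Set TGraph :=
  {G | G.NoXY ∧ ∃ a b : ℕ, IsDumbbellBar G a b ∧ ((a, b), true) ∈ G.ops ∧
    thetaP G = 0 ∧
    (∀ μ ∈ G.ops, s(μ.1.1, μ.1.2) ≠ s(a, b) → gP (G.apply μ) ≤ gP G - 1) ∧
    epspP (G.apply ((a, b), true)) = 1}

/-- `G` is an `xy`-sum with parts `G₁` and `G₂`. -/
structure XYSum (G G1 G2 : TGraph) : Prop where
  x1 : G1.x = G.x
  y1 : G1.y = G.y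
  x2 : G2.x = G.x
  y2 : G2.y = G.y
  no1 : G1.NoXY
  no2 : G2.NoXY
  vint : G1.G.verts ∩ G2.G.verts = {G.x, G.y}
  vuni : G.G.verts = G1.G.verts ∪ G2.G.verts
  edges : G.G.edges = G1.G.edges ∪ G2.G.edges ∨
    G.G.edges = insert s(G.x, G.y) (G1.G.edges ∪ G2.G.edges)

/-!
If `xy` is already an edge then `G⁺ = G`. Otherwise take a minimum genus embedding of `G`, an
`xy`-alternating one when `ε(G) = 1`, and draw the edge `xy` through a corner at `x` and a corner
at `y`. On rotation systems this is precomposition with two transpositions, and precomposing a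
permutation with a transposition either merges the two cycles through the transposed points or
splits their common cycle into two. Feeding the resulting change in the number of faces,
components and isolated vertices into the Euler formula, the genus goes up by at most one, and
not at all when the two corners lie on a common face, which an alternating face provides.
Inserting the edges of a graph one at a time also shows that every graph has an embedding with
even Euler characteristic, so that the infimum defining the genus is attained.
-/

section Orbit

variable {α : Type*} {f g : α → α} {s t : Set α} {x y : α}

def orb (f : α → α) (x : α) : Set α := {y | ∃ n : ℕ, f^[n] x = y}

def orbs (f : α → α) (s : Set α) : Set (Set α) := {S | ∃ x ∈ s, S = orb f x}

lemma mem_orb_self (f : α → α) (x : α) : x ∈ orb f x := ⟨0, rfl⟩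

lemma iterate_mem_orb (f : α → α) (x : α) (n : ℕ) : f^[n] x ∈ orb f x := ⟨n, rfl⟩

lemma apply_mem_orb (hy : y ∈ orb f x) : f y ∈ orb f x := by
  obtain ⟨n, rfl⟩ := hy
  exact ⟨n + 1, Function.iterate_succ_apply' f n x⟩

lemma orb_subset_orb (hy : y ∈ orb f x) : orb f y ⊆ orb f x := by
  obtain ⟨m, rfl⟩ := hy
  rintro z ⟨n, rfl⟩
  exact ⟨n + m, Function.iterate_add_apply f n m x⟩

lemma orb_subset (h : Set.MapsTo f s s) (hx : x ∈ s) : orb f x ⊆ s := by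
  rintro y ⟨n, rfl⟩
  exact h.iterate n hx

lemma orb_eq_singleton (h : f x = x) : orb f x = {x} := by
  ext y
  exact ⟨fun ⟨n, hn⟩ => hn ▸ Function.iterate_fixed h n, fun hy => ⟨0, hy.symm⟩⟩

lemma orb_eq_pair (h₁ : f x = y) (h₂ : f y = x) : orb f x = {x, y} := by
  refine (orb_subset (s := {x, y}) ?_ (Set.mem_insert x _)).antisymm ?_
  · rintro z (rfl | rfl)
    exacts [h₁ ▸ Set.mem_insert_of_mem _ rfl, h₂ ▸ Set.mem_insert _ _]
  · rintro z (rfl | rfl)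
    exacts [mem_orb_self f z, ⟨1, h₁⟩]

lemma iterate_eq_iterate_of_eqOn {n : ℕ} (h : ∀ j < n, f (g^[j] x) = g (g^[j] x)) :
    f^[n] x = g^[n] x := by
  induction n with
  | zero => rfl
  | succ n ih =>
    rw [Function.iterate_succ_apply', Function.iterate_succ_apply',
      ih fun j hj => h j (by omega), h n n.lt_succ_self]

lemma orb_congr (h : Set.MapsTo f s s) (hfg : Set.EqOn f g s) (hx : x ∈ s) :
    orb f x = orb g x := by
  have key (n : ℕ) : g^[n] x = f^[n] x :=
    iterate_eq_iterate_of_eqOn fun j _ => (hfg (h.iterate j hx)).symm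
  ext y
  exact ⟨fun ⟨n, hn⟩ => ⟨n, key n ▸ hn⟩, fun ⟨n, hn⟩ => ⟨n, (key n).symm ▸ hn⟩⟩

lemma orbs_finite (hs : s.Finite) : (orbs f s).Finite := by
  convert hs.image (orb f) using 1
  ext S
  simp [orbs, eq_comm]

lemma exists_isPeriodicPt_of_bijOn (hs : s.Finite) (hf : Set.BijOn f s s) (hx : x ∈ s) :
    ∃ p, 0 < p ∧ Function.IsPeriodicPt f p x := by
  obtain ⟨m, n, hmn, h⟩ := hs.exists_lt_map_eq_of_forall_mem (f := (f^[·] x))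
    fun n => hf.mapsTo.iterate n hx
  refine ⟨n - m, by omega, (hf.injOn.iterate hf.mapsTo m) (hf.mapsTo.iterate _ hx) hx ?_⟩
  rw [← Function.iterate_add_apply, Nat.add_sub_cancel' hmn.le, h]

lemma minimalPeriod_pos_of_bijOn (hs : s.Finite) (hf : Set.BijOn f s s) (hx : x ∈ s) :
    0 < Function.minimalPeriod f x := by
  obtain ⟨p, hp, hper⟩ := exists_isPeriodicPt_of_bijOn hs hf hx
  exact hper.minimalPeriod_pos hp

lemma mem_orb_comm (hs : s.Finite) (hf : Set.BijOn f s s) (hx : x ∈ s) (hy : y ∈ orb f x) :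
    x ∈ orb f y := by
  obtain ⟨n, rfl⟩ := hy
  obtain ⟨p, hp, hper⟩ := exists_isPeriodicPt_of_bijOn hs hf hx
  refine ⟨p * (n + 1) - n, ?_⟩
  rw [← Function.iterate_add_apply, Nat.sub_add_cancel (by nlinarith)]
  exact (hper.mul_const _).eq

lemma orb_eq_of_mem (hs : s.Finite) (hf : Set.BijOn f s s) (hx : x ∈ s) (hy : y ∈ orb f x) :
    orb f y = orb f x :=
  (orb_subset_orb hy).antisymm (orb_subset_orb (mem_orb_comm hs hf hx hy))

def IsCyclicOn (f : α → α) (t : Set α) : Prop := ∀ x ∈ t, ∀ y ∈ t, y ∈ orb f x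

lemma isCyclicOn_singleton (f : α → α) (x : α) : IsCyclicOn f {x} := by
  intro y hy z hz
  rw [hy, hz]
  exact mem_orb_self f x

lemma IsCyclicOn.congr (h : IsCyclicOn f t) (hmaps : Set.MapsTo f t t) (hfg : Set.EqOn f g t) :
    IsCyclicOn g t :=
  fun x hx y hy => orb_congr hmaps hfg hx ▸ h x hx y hy

end Orbit

section CompSwap

variable {α : Type*} [DecidableEq α] {F : α → α} {s t : Set α} {a b x : α}

def compSwap (F : α → α) (a b : α) : α → α := fun x => F (Equiv.swap a b x)

lemma compSwap_apply_left (F : α → α) (a b : α) : compSwap F a b a = F b := by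
  simp [compSwap]

lemma compSwap_apply_of_ne (F : α → α) (ha : x ≠ a) (hb : x ≠ b) : compSwap F a b x = F x := by
  simp [compSwap, Equiv.swap_apply_of_ne_of_ne ha hb]

lemma compSwap_self (F : α → α) (a : α) : compSwap F a a = F := by
  funext x
  simp [compSwap]

lemma compSwap_compSwap (F : α → α) (a b : α) : compSwap (compSwap F a b) a b = F := by
  funext x
  simp [compSwap]

lemma swap_apply_mem (ha : a ∈ s) (hb : b ∈ s) (hx : x ∈ s) : Equiv.swap a b x ∈ s := by
  rw [Equiv.swap_apply_def]
  split_ifs <;> assumption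

lemma mapsTo_compSwap (hF : Set.MapsTo F s s) (ha : a ∈ s) (hb : b ∈ s) :
    Set.MapsTo (compSwap F a b) s s :=
  fun _ hx => hF (swap_apply_mem ha hb hx)

lemma bijOn_compSwap (hF : Set.BijOn F s s) (ha : a ∈ s) (hb : b ∈ s) :
    Set.BijOn (compSwap F a b) s s :=
  hF.comp ⟨fun _ hx => swap_apply_mem ha hb hx, (Equiv.swap a b).injective.injOn,
    fun y hy => ⟨Equiv.swap a b y, swap_apply_mem ha hb hy, Equiv.swap_apply_self a b y⟩⟩

lemma orb_compSwap_union_subset :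
    orb (compSwap F a b) a ∪ orb (compSwap F a b) b ⊆ orb F a ∪ orb F b := by
  have hU : Set.MapsTo F (orb F a ∪ orb F b) (orb F a ∪ orb F b) := by
    rintro x (hx | hx)
    exacts [Or.inl (apply_mem_orb hx), Or.inr (apply_mem_orb hx)]
  have hU' := mapsTo_compSwap hU (Or.inl (mem_orb_self F a)) (Or.inr (mem_orb_self F b))
  exact Set.union_subset (orb_subset hU' (Or.inl (mem_orb_self F a)))
    (orb_subset hU' (Or.inr (mem_orb_self F b)))

lemma orb_compSwap_of_notMem (hs : s.Finite) (hF : Set.BijOn F s s) (hb : b ∈ s)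
    (hab : b ∉ orb F a) : orb (compSwap F a b) a = orb F a ∪ orb F b := by
  set T := compSwap F a b
  have hba : a ∉ orb F b := fun h => hab (mem_orb_comm hs hF hb h)
  -- `T a = F b`, and from there `T` follows the `F`-orbit of `b` back to `b`
  have hbT : b ∈ orb T a := by
    set k := Function.minimalPeriod F b
    have hk : 0 < k := minimalPeriod_pos_of_bijOn hs hF hb
    have hTF : T^[k - 1] (F b) = F^[k - 1] (F b) := by
      refine iterate_eq_iterate_of_eqOn fun j hj => compSwap_apply_of_ne F ?_ ?_
      · exact fun h => hba ⟨j + 1, by rwa [Function.iterate_succ_apply]⟩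
      · rw [← Function.iterate_succ_apply]
        exact Function.not_isPeriodicPt_of_pos_of_lt_minimalPeriod j.succ_ne_zero (by omega)
    refine ⟨k, ?_⟩
    rw [← Nat.sub_add_cancel hk, Function.iterate_succ_apply,
      show T a = F b from compSwap_apply_left F a b, hTF, ← Function.iterate_succ_apply,
      Nat.succ_eq_add_one, Nat.sub_add_cancel hk, Function.iterate_minimalPeriod]
  have hsub : orb F a ∪ orb F b ⊆ orb T a ∪ orb T b := by
    simpa only [T, compSwap_compSwap] using orb_compSwap_union_subset (F := T) (a := a) (b := b)
  exact (Set.subset_union_left.trans orb_compSwap_union_subset).antisymm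
    (hsub.trans (Set.union_subset le_rfl (orb_subset_orb hbT)))

/-- The new cycle through `a` skips the arc `F a, …, F^[m] a` of the old one. -/
lemma iterate_compSwap_iterate {m j : ℕ} (hm : m < Function.minimalPeriod F a)
    (hj : j < Function.minimalPeriod F a - m) :
    (compSwap F a (F^[m] a))^[j + 1] a = F^[m + 1 + j] a := by
  set p := Function.minimalPeriod F a
  have hinj {i k : ℕ} (hi : i < p) (hk : k < p) (h : F^[i] a = F^[k] a) : i = k :=
    (Function.iterate_eq_iterate_iff_of_lt_minimalPeriod hi hk).mp h
  have hagree : (compSwap F a (F^[m] a))^[j] (F^[m + 1] a) = F^[j] (F^[m + 1] a) := by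
    refine iterate_eq_iterate_of_eqOn fun i hi => compSwap_apply_of_ne F ?_ ?_ <;>
      rw [← Function.iterate_add_apply] <;> intro h
    · have := hinj (by omega) (by omega) (h.trans (Function.iterate_zero_apply F a).symm)
      omega
    · have := hinj (by omega) hm h
      omega
  rw [Function.iterate_succ_apply, compSwap_apply_left, ← Function.iterate_succ_apply' F, hagree,
    ← Function.iterate_add_apply, add_comm j]

lemma notMem_orb_compSwap_of_mem (hs : s.Finite) (hF : Set.BijOn F s s) (ha : a ∈ s)
    (hne : a ≠ b) (hab : b ∈ orb F a) : b ∉ orb (compSwap F a b) a := by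
  obtain ⟨n, rfl⟩ := hab
  rw [← Function.iterate_mod_minimalPeriod_eq] at hne ⊢
  set p := Function.minimalPeriod F a
  have hp : 0 < p := minimalPeriod_pos_of_bijOn hs hF ha
  set m := n % p
  have hm : m < p := Nat.mod_lt n hp
  have hm0 : m ≠ 0 := fun h => hne (by rw [h]; rfl)
  have hper : Function.IsPeriodicPt (compSwap F a (F^[m] a)) (p - m) a := by
    have h := iterate_compSwap_iterate (j := p - m - 1) hm (by omega)
    rwa [Nat.sub_add_cancel (by omega : 1 ≤ p - m), show m + 1 + (p - m - 1) = p by omega,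
      Function.iterate_minimalPeriod] at h
  rintro ⟨k, hk⟩
  rw [← hper.iterate_mod_apply] at hk
  have hlt : k % (p - m) < p - m := Nat.mod_lt _ (by omega)
  obtain h0 | ⟨i, hi⟩ : k % (p - m) = 0 ∨ ∃ i, k % (p - m) = i + 1 :=
    (Nat.eq_zero_or_pos _).imp id fun h => ⟨k % (p - m) - 1, by omega⟩
  · rw [h0] at hk
    exact hne hk
  · rw [hi, iterate_compSwap_iterate hm (by omega)] at hk
    have := (Function.iterate_eq_iterate_iff_of_lt_minimalPeriod (by omega) hm).mp hk
    omega

lemma orbs_compSwap_of_notMem (hs : s.Finite) (hF : Set.BijOn F s s) (ha : a ∈ s) (hb : b ∈ s)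
    (hab : b ∉ orb F a) :
    orbs (compSwap F a b) s = insert (orb F a ∪ orb F b) (orbs F s \ {orb F a, orb F b}) := by
  set T := compSwap F a b
  have hT : Set.BijOn T s s := bijOn_compSwap hF ha hb
  have hTa : orb T a = orb F a ∪ orb F b := orb_compSwap_of_notMem hs hF hb hab
  have hoff {x : α} (hx : x ∈ s) (hxa : x ∉ orb F a) (hxb : x ∉ orb F b) : orb T x = orb F x := by
    refine (orb_congr (fun _ => apply_mem_orb) (fun y hy => ?_) (mem_orb_self F x)).symm
    refine (compSwap_apply_of_ne F ?_ ?_).symm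
    · rintro rfl; exact hxa (mem_orb_comm hs hF hx hy)
    · rintro rfl; exact hxb (mem_orb_comm hs hF hx hy)
  ext S
  constructor
  · rintro ⟨x, hx, rfl⟩
    by_cases hxT : x ∈ orb T a
    · exact Or.inl (by rw [orb_eq_of_mem hs hT ha hxT, hTa])
    · obtain ⟨hxa, hxb⟩ := not_or.mp (hTa ▸ hxT)
      rw [hoff hx hxa hxb]
      refine Or.inr ⟨⟨x, hx, rfl⟩, ?_⟩
      rintro (h | h)
      exacts [hxa (h ▸ mem_orb_self F x), hxb (h ▸ mem_orb_self F x)]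
  · rintro (rfl | ⟨⟨x, hx, rfl⟩, hS⟩)
    · exact ⟨a, ha, hTa.symm⟩
    · have hxa : x ∉ orb F a := fun h => hS (Or.inl (orb_eq_of_mem hs hF ha h))
      have hxb : x ∉ orb F b := fun h => hS (Or.inr (orb_eq_of_mem hs hF hb h))
      exact ⟨x, hx, (hoff hx hxa hxb).symm⟩

lemma ncard_orbs_compSwap_of_notMem (hs : s.Finite) (hF : Set.BijOn F s s) (ha : a ∈ s)
    (hb : b ∈ s) (hab : b ∉ orb F a) :
    (orbs (compSwap F a b) s).ncard + 1 = (orbs F s).ncard := by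
  have hfin := orbs_finite (f := F) hs
  have hpair : {orb F a, orb F b} ⊆ orbs F s :=
    Set.insert_subset ⟨a, ha, rfl⟩ (Set.singleton_subset_iff.mpr ⟨b, hb, rfl⟩)
  have hne : orb F a ≠ orb F b := fun h => hab (h ▸ mem_orb_self F b)
  have hnotin : orb F a ∪ orb F b ∉ orbs F s \ {orb F a, orb F b} := by
    rintro ⟨⟨x, hx, hx'⟩, hS⟩
    have hax : a ∈ orb F x := hx' ▸ Or.inl (mem_orb_self F a)
    exact hS (Or.inl (hx'.trans (orb_eq_of_mem hs hF hx hax).symm))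
  rw [orbs_compSwap_of_notMem hs hF ha hb hab, Set.ncard_insert_of_notMem hnotin hfin.sdiff,
    ← Set.ncard_sdiff_add_ncard_of_subset hpair hfin, Set.ncard_pair hne]

lemma ncard_orbs_compSwap (hs : s.Finite) (hF : Set.BijOn F s s) (ha : a ∈ s) (hb : b ∈ s)
    (hne : a ≠ b) :
    ((orbs (compSwap F a b) s).ncard : ℤ) = (orbs F s).ncard + if b ∈ orb F a then 1 else -1 := by
  split_ifs with hab
  · have h := ncard_orbs_compSwap_of_notMem hs (bijOn_compSwap hF ha hb) ha hb
      (notMem_orb_compSwap_of_mem hs hF ha hne hab)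
    rw [compSwap_compSwap] at h
    omega
  · have h := ncard_orbs_compSwap_of_notMem hs hF ha hb hab
    omega

lemma IsCyclicOn.compSwap_insert (hs : s.Finite) (hF : Set.BijOn F s s) (h : IsCyclicOn F t)
    (hts : t ⊆ s) (ha : a ∈ t) (hb : b ∈ s) (hbt : b ∉ t) (hFb : F b = b) :
    IsCyclicOn (compSwap F a b) (insert b t) := by
  have hab : b ∉ orb F a := by
    intro hba
    have hab' : a ∈ orb F b := mem_orb_comm hs hF (hts ha) hba
    rw [orb_eq_singleton hFb, Set.mem_singleton_iff] at hab'
    exact hbt (hab' ▸ ha)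
  have hsub : insert b t ⊆ orb (compSwap F a b) a := by
    rw [orb_compSwap_of_notMem hs hF hb hab, Set.insert_subset_iff]
    exact ⟨Or.inr (mem_orb_self F b), fun y hy => Or.inl (h a ha y hy)⟩
  intro x hx y hy
  rw [orb_eq_of_mem hs (bijOn_compSwap hF (hts ha) hb) (hts ha) (hsub hx)]
  exact hsub hy

end CompSwap

namespace FinGraph

variable {G : FinGraph} {d : ℕ × ℕ} {p q u v w : ℕ}

lemma ext_of_verts_edges {H : FinGraph} (h₁ : G.verts = H.verts) (h₂ : G.edges = H.edges) :
    G = H := by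
  cases G; cases H
  simp only at h₁ h₂
  subst h₁ h₂
  rfl

lemma swap_mem_darts (hd : d ∈ G.darts) : d.swap ∈ G.darts := by
  simpa [darts, Sym2.eq_swap] using hd

lemma swap_notMem_darts (h : s(u, v) ∉ G.edges) : (v, u) ∉ G.darts :=
  fun h' => h (swap_mem_darts h')

lemma darts_finite (G : FinGraph) : G.darts.Finite :=
  (G.verts ×ˢ G.verts).finite_toSet.subset fun _ hd =>
    Finset.mem_coe.mpr (Finset.mem_product.mpr
      ⟨G.edge_sub _ hd _ (Sym2.mem_mk_left _ _), G.edge_sub _ hd _ (Sym2.mem_mk_right _ _)⟩)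

def dartsAt (G : FinGraph) (u : ℕ) : Set (ℕ × ℕ) := {d ∈ G.darts | d.1 = u}

def HasDart (G : FinGraph) (u : ℕ) : Prop := ∃ w, (u, w) ∈ G.darts

lemma hasDart_of_mem_darts (hd : d ∈ G.darts) : G.HasDart d.1 := ⟨d.2, hd⟩

lemma hasDart_iff : G.HasDart u ↔ ¬ ∀ e ∈ G.edges, u ∉ e := by
  refine ⟨fun ⟨w, hw⟩ h => h _ hw (Sym2.mem_mk_left _ _), fun h => ?_⟩
  obtain ⟨e, he, hue⟩ : ∃ e ∈ G.edges, u ∈ e := by simpa using h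
  induction e using Sym2.ind with
  | _ p q =>
    rcases Sym2.mem_iff.mp hue with rfl | rfl
    · exact ⟨q, he⟩
    · exact ⟨p, show s(u, p) ∈ G.edges by rwa [Sym2.eq_swap]⟩

lemma Adj.symm (h : G.Adj p q) : G.Adj q p := by
  rwa [Adj, Sym2.eq_swap]

lemma Reach.symm (h : G.Reach p q) : G.Reach q p := by
  induction h with
  | refl => exact Relation.ReflTransGen.refl
  | tail _ hadj ih => exact Relation.ReflTransGen.head hadj.symm ih

lemma hasDart_of_reach (h : G.Reach p q) (hne : p ≠ q) : G.HasDart p := by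
  rcases Relation.ReflTransGen.cases_head h with rfl | ⟨c, hc, -⟩
  exacts [absurd rfl hne, ⟨c, hc⟩]

def comp (G : FinGraph) (v : ℕ) : Set ℕ := {p | G.Reach v p}

lemma compCount_eq (G : FinGraph) : G.compCount = (G.comp '' G.verts).ncard := by
  unfold compCount
  congr 1
  ext S
  simp [comp, Set.mem_image, eq_comm]

lemma comp_eq_comp_iff : G.comp p = G.comp q ↔ G.Reach p q := by
  refine ⟨fun h => ?_, fun h => Set.ext fun z => ⟨h.symm.trans, h.trans⟩⟩
  have hq : q ∈ G.comp q := Relation.ReflTransGen.refl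
  rwa [← h] at hq

end FinGraph

section Faces

variable {G : FinGraph} {d d' : ℕ × ℕ}

lemma bijOn_faceMap (R : Rot G) : Set.BijOn (faceMap R) G.darts G.darts :=
  R.bij.comp ⟨fun _ => FinGraph.swap_mem_darts, Prod.swap_injective.injOn,
    fun d hd => ⟨d.swap, FinGraph.swap_mem_darts hd, Prod.swap_swap d⟩⟩

lemma fst_faceMap (R : Rot G) (hd : d ∈ G.darts) : (faceMap R d).1 = d.2 :=
  R.fix d.swap (FinGraph.swap_mem_darts hd)

lemma reach_of_mem_orb_faceMap (R : Rot G) (hd : d ∈ G.darts) (h : d' ∈ orb (faceMap R) d) :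
    G.Reach d.2 d'.2 := by
  obtain ⟨n, rfl⟩ := h
  induction n with
  | zero => exact Relation.ReflTransGen.refl
  | succ n ih =>
    have hn : (faceMap R)^[n] d ∈ G.darts := (bijOn_faceMap R).mapsTo.iterate n hd
    have hadj : G.Adj (faceMap R ((faceMap R)^[n] d)).1 (faceMap R ((faceMap R)^[n] d)).2 :=
      (bijOn_faceMap R).mapsTo hn
    rw [fst_faceMap R hn] at hadj
    rw [Function.iterate_succ_apply']
    exact ih.tail hadj

lemma eulerVal_eq (R : Rot G) :
    eulerVal G R = 2 * (G.compCount : ℤ) - G.verts.card + G.edges.card -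
      ((orbs (faceMap R) G.darts).ncard + G.isolCount) := by
  simp only [eulerVal, faceCount, orbs, orb, Nat.cast_add]

end Faces

namespace FinGraph

def addE (G : FinGraph) (u v : ℕ) (hu : u ∈ G.verts) (hv : v ∈ G.verts) (huv : u ≠ v) :
    FinGraph where
  verts := G.verts
  edges := insert s(u, v) G.edges
  edge_sub := by
    intro e he w hw
    rcases Finset.mem_insert.mp he with rfl | h
    · rcases Sym2.mem_iff.mp hw with rfl | rfl
      exacts [hu, hv]
    · exact G.edge_sub e h w hw
  loopless := by
    intro e he
    rcases Finset.mem_insert.mp he with rfl | h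
    · simpa [Sym2.mk_isDiag_iff] using huv
    · exact G.loopless e h

def dartsWith (G : FinGraph) (u v : ℕ) : Set (ℕ × ℕ) := insert (u, v) (insert (v, u) G.darts)

variable {G : FinGraph} {p q u v w : ℕ} {hu : u ∈ G.verts} {hv : v ∈ G.verts} {huv : u ≠ v}

lemma dartsWith_comm (G : FinGraph) (u v : ℕ) : G.dartsWith u v = G.dartsWith v u :=
  Set.insert_comm _ _ _

lemma darts_subset_dartsWith (G : FinGraph) (u v : ℕ) : G.darts ⊆ G.dartsWith u v :=
  (Set.subset_insert _ _).trans (Set.subset_insert _ _)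

lemma mem_dartsWith_left (G : FinGraph) (u v : ℕ) : (u, v) ∈ G.dartsWith u v :=
  Set.mem_insert _ _

lemma mem_dartsWith_right (G : FinGraph) (u v : ℕ) : (v, u) ∈ G.dartsWith u v :=
  Set.mem_insert_of_mem _ (Set.mem_insert _ _)

lemma dartsWith_finite (G : FinGraph) (u v : ℕ) : (G.dartsWith u v).Finite :=
  (G.darts_finite.insert _).insert _

lemma swap_mem_dartsWith {d : ℕ × ℕ} (hd : d ∈ G.dartsWith u v) : d.swap ∈ G.dartsWith u v := by
  rcases hd with rfl | rfl | hd
  exacts [mem_dartsWith_right G u v, mem_dartsWith_left G u v,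
    darts_subset_dartsWith G u v (swap_mem_darts hd)]

lemma sep_fst_dartsWith_self (huv : u ≠ v) :
    {d ∈ G.dartsWith u v | d.1 = u} = insert (u, v) (G.dartsAt u) := by
  ext d
  simp only [dartsWith, dartsAt, Set.mem_sep_iff, Set.mem_insert_iff]
  constructor
  · rintro ⟨rfl | rfl | h, hd⟩
    exacts [Or.inl rfl, absurd hd (Ne.symm huv), Or.inr ⟨h, hd⟩]
  · rintro (rfl | ⟨h, hd⟩)
    exacts [⟨Or.inl rfl, rfl⟩, ⟨Or.inr (Or.inr h), hd⟩]

lemma sep_fst_dartsWith_of_ne (hwu : w ≠ u) (hwv : w ≠ v) :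
    {d ∈ G.dartsWith u v | d.1 = w} = G.dartsAt w := by
  ext d
  simp only [dartsWith, dartsAt, Set.mem_sep_iff, Set.mem_insert_iff]
  constructor
  · rintro ⟨rfl | rfl | h, hd⟩
    exacts [absurd hd.symm hwu, absurd hd.symm hwv, ⟨h, hd⟩]
  · exact fun ⟨h, hd⟩ => ⟨Or.inr (Or.inr h), hd⟩

lemma darts_addE : (G.addE u v hu hv huv).darts = G.dartsWith u v := by
  ext ⟨p, q⟩
  simp only [darts, addE, dartsWith, Set.mem_ofPred_eq, Finset.mem_insert, Set.mem_insert_iff,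
    Sym2.eq_iff, Prod.mk.injEq]
  tauto

lemma addE_comm : G.addE u v hu hv huv = G.addE v u hv hu huv.symm :=
  ext_of_verts_edges rfl (by simp only [addE, Sym2.eq_swap])

lemma addE_adj :
    (G.addE u v hu hv huv).Adj p q ↔ G.Adj p q ∨ (p = u ∧ q = v) ∨ (p = v ∧ q = u) := by
  simp only [Adj, addE, Finset.mem_insert, Sym2.eq_iff]
  tauto

lemma addE_reach : (G.addE u v hu hv huv).Reach p q ↔
    G.Reach p q ∨ (G.Reach p u ∧ G.Reach v q) ∨ (G.Reach p v ∧ G.Reach u q) := by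
  constructor
  · intro h
    induction h with
    | refl => exact Or.inl Relation.ReflTransGen.refl
    | @tail b c _ hbc ih =>
      rcases addE_adj.mp hbc with h | ⟨rfl, rfl⟩ | ⟨rfl, rfl⟩
      · rcases ih with h₁ | ⟨h₁, h₂⟩ | ⟨h₁, h₂⟩
        · exact Or.inl (h₁.tail h)
        · exact Or.inr (Or.inl ⟨h₁, h₂.tail h⟩)
        · exact Or.inr (Or.inr ⟨h₁, h₂.tail h⟩)
      · rcases ih with h₁ | ⟨h₁, h₂⟩ | h₁
        · exact Or.inr (Or.inl ⟨h₁, Relation.ReflTransGen.refl⟩)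
        · exact Or.inl (h₁.trans h₂.symm)
        · exact Or.inl h₁.1
      · rcases ih with h₁ | h₁ | ⟨h₁, h₂⟩
        · exact Or.inr (Or.inr ⟨h₁, Relation.ReflTransGen.refl⟩)
        · exact Or.inl h₁.1
        · exact Or.inl (h₁.trans h₂.symm)
  · have lift {a b : ℕ} (h : G.Reach a b) : (G.addE u v hu hv huv).Reach a b :=
      Relation.ReflTransGen.mono (fun _ _ h => addE_adj.mpr (Or.inl h)) a b h
    rintro (h | ⟨h₁, h₂⟩ | ⟨h₁, h₂⟩)
    · exact lift h
    · exact ((lift h₁).tail (addE_adj.mpr (Or.inr (Or.inl ⟨rfl, rfl⟩)))).trans (lift h₂)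
    · exact ((lift h₁).tail (addE_adj.mpr (Or.inr (Or.inr ⟨rfl, rfl⟩)))).trans (lift h₂)

lemma comp_addE_of_reach (h : G.Reach w u) :
    (G.addE u v hu hv huv).comp w = G.comp u ∪ G.comp v := by
  ext q
  simp only [comp, Set.mem_ofPred_eq, Set.mem_union, addE_reach]
  constructor
  · rintro (hq | ⟨-, hq⟩ | ⟨-, hq⟩)
    exacts [Or.inl (h.symm.trans hq), Or.inr hq, Or.inl hq]
  · rintro (hq | hq)
    exacts [Or.inl (h.trans hq), Or.inr (Or.inl ⟨h, hq⟩)]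

lemma comp_addE_of_not_reach (hwu : ¬ G.Reach w u) (hwv : ¬ G.Reach w v) :
    (G.addE u v hu hv huv).comp w = G.comp w := by
  ext q
  simp only [comp, Set.mem_ofPred_eq, addE_reach]
  tauto

lemma image_comp_addE : (G.addE u v hu hv huv).comp '' G.verts =
    insert (G.comp u ∪ G.comp v) (G.comp '' G.verts \ {G.comp u, G.comp v}) := by
  ext S
  constructor
  · rintro ⟨w, hw, rfl⟩
    by_cases hwu : G.Reach w u
    · exact Or.inl (comp_addE_of_reach hwu)
    by_cases hwv : G.Reach w v
    · rw [addE_comm, comp_addE_of_reach hwv, Set.union_comm]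
      exact Or.inl rfl
    rw [comp_addE_of_not_reach hwu hwv]
    refine Or.inr ⟨⟨w, hw, rfl⟩, ?_⟩
    rintro (h | h)
    exacts [hwu (comp_eq_comp_iff.mp h), hwv (comp_eq_comp_iff.mp h)]
  · rintro (rfl | ⟨⟨w, hw, rfl⟩, hS⟩)
    · exact ⟨u, hu, comp_addE_of_reach Relation.ReflTransGen.refl⟩
    · refine ⟨w, hw, comp_addE_of_not_reach (fun h => hS ?_) (fun h => hS ?_)⟩
      exacts [Or.inl (comp_eq_comp_iff.mpr h), Or.inr (comp_eq_comp_iff.mpr h)]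

lemma compCount_addE :
    (G.addE u v hu hv huv).compCount + (if G.Reach u v then 1 else 2) = G.compCount + 1 := by
  have hfin : (G.comp '' G.verts).Finite := G.verts.finite_toSet.image _
  have hpair : {G.comp u, G.comp v} ⊆ G.comp '' G.verts :=
    Set.insert_subset ⟨u, hu, rfl⟩ (Set.singleton_subset_iff.mpr ⟨v, hv, rfl⟩)
  have hnotin : G.comp u ∪ G.comp v ∉ G.comp '' G.verts \ {G.comp u, G.comp v} := by
    rintro ⟨⟨w, -, hw⟩, hS⟩
    have hwu : G.Reach w u := show u ∈ G.comp w from hw ▸ Or.inl Relation.ReflTransGen.refl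
    exact hS (Or.inl (hw.symm.trans (comp_eq_comp_iff.mpr hwu)))
  rw [compCount_eq, compCount_eq, show (G.addE u v hu hv huv).verts = G.verts from rfl,
    image_comp_addE, Set.ncard_insert_of_notMem hnotin hfin.sdiff,
    ← Set.ncard_sdiff_add_ncard_of_subset hpair hfin]
  split_ifs with h
  · rw [comp_eq_comp_iff.mpr h, Set.pair_eq_singleton, Set.ncard_singleton]
  · rw [Set.ncard_pair (fun h' => h (comp_eq_comp_iff.mp h'))]

lemma isolCount_addE : (G.addE u v hu hv huv).isolCount + 2 =
    G.isolCount + (if G.HasDart u then 1 else 0) + (if G.HasDart v then 1 else 0) := by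
  unfold isolCount
  set I := G.verts.filter (fun x => ∀ e ∈ G.edges, x ∉ e)
  have hI : (G.addE u v hu hv huv).verts.filter
      (fun x => ∀ e ∈ (G.addE u v hu hv huv).edges, x ∉ e) = (I.erase u).erase v := by
    ext x
    simp only [addE, I, Finset.mem_filter, Finset.mem_erase, Finset.mem_insert,
      forall_eq_or_imp, Sym2.mem_iff, not_or]
    tauto
  have hcard (s : Finset ℕ) (a : ℕ) : s.card = (s.erase a).card + if a ∈ s then 1 else 0 := by
    split_ifs with h
    · exact (Finset.card_erase_add_one h).symm
    · rw [Finset.erase_eq_of_notMem h, add_zero]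
  have huI : u ∈ I ↔ ¬ G.HasDart u := by simp [I, hu, hasDart_iff]
  have hvI : v ∈ I.erase u ↔ ¬ G.HasDart v := by simp [I, hv, huv.symm, hasDart_iff]
  rw [hI, hcard I u, hcard (I.erase u) v]
  simp only [huI, hvI]
  split_ifs <;> omega

lemma card_edges_addE (hne : s(u, v) ∉ G.edges) :
    (G.addE u v hu hv huv).edges.card = G.edges.card + 1 :=
  Finset.card_insert_of_notMem hne

end FinGraph

namespace FinGraph

variable {G : FinGraph} {u v : ℕ} {du : ℕ × ℕ}

/-- A dart at `u` after which a new dart `(u, v)` can be inserted into the rotation at `u`; for an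
isolated vertex `u` we take `(u, v)` itself, which makes the insertion trivial. -/
def IsSlot (G : FinGraph) (u v : ℕ) (du : ℕ × ℕ) : Prop :=
  du ∈ G.dartsAt u ∨ (du = (u, v) ∧ ¬ G.HasDart u)

lemma exists_isSlot (G : FinGraph) (u v : ℕ) : ∃ du, G.IsSlot u v du := by
  by_cases h : G.HasDart u
  · obtain ⟨w, hw⟩ := h
    exact ⟨(u, w), Or.inl ⟨hw, rfl⟩⟩
  · exact ⟨(u, v), Or.inr ⟨rfl, h⟩⟩

lemma IsSlot.fst (h : G.IsSlot u v du) : du.1 = u := by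
  rcases h with h | ⟨rfl, -⟩
  exacts [h.2, rfl]

lemma IsSlot.mem_darts_iff (h : G.IsSlot u v du) : du ∈ G.darts ↔ G.HasDart u := by
  rcases h with h | ⟨rfl, hu⟩
  · exact ⟨fun _ => h.2 ▸ hasDart_of_mem_darts h.1, fun _ => h.1⟩
  · exact ⟨fun h => absurd ⟨v, h⟩ hu, fun h => absurd h hu⟩

lemma IsSlot.mem_dartsWith (h : G.IsSlot u v du) : du ∈ G.dartsWith u v := by
  rcases h with h | ⟨rfl, -⟩
  exacts [darts_subset_dartsWith G u v h.1, mem_dartsWith_left G u v]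

end FinGraph

lemma fst_swap_apply {a b : ℕ × ℕ} (x : ℕ × ℕ) (h : a.1 = b.1) :
    (Equiv.swap a b x).1 = x.1 := by
  rw [Equiv.swap_apply_def]
  split_ifs with h₁ h₂
  · rw [h₁, h]
  · rw [h₂, h]
  · rfl

lemma swap_apply_of_fst_ne {a b x : ℕ × ℕ} (ha : x.1 ≠ a.1) (hb : x.1 ≠ b.1) :
    Equiv.swap a b x = x :=
  Equiv.swap_apply_of_ne_of_ne (fun h => ha (h ▸ rfl)) (fun h => hb (h ▸ rfl))

lemma prod_swap_swap_apply (a b x : ℕ × ℕ) :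
    (Equiv.swap a b x).swap = Equiv.swap a.swap b.swap x.swap := by
  simp only [Equiv.swap_apply_def, Prod.swap_inj]
  split_ifs <;> rfl

namespace Rot

open FinGraph

variable {G : FinGraph} {u v : ℕ} {d du dv : ℕ × ℕ}

noncomputable def extend (R : Rot G) : ℕ × ℕ → ℕ × ℕ := fun d => if d ∈ G.darts then R.r d else d

lemma extend_of_mem (R : Rot G) (hd : d ∈ G.darts) : R.extend d = R.r d := if_pos hd

lemma extend_of_notMem (R : Rot G) (hd : d ∉ G.darts) : R.extend d = d := if_neg hd

lemma fst_extend (R : Rot G) (d : ℕ × ℕ) : (R.extend d).1 = d.1 := by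
  by_cases hd : d ∈ G.darts
  · rw [R.extend_of_mem hd, R.fix d hd]
  · rw [R.extend_of_notMem hd]

lemma bijOn_extend (R : Rot G) {t : Set (ℕ × ℕ)} (ht : G.darts ⊆ t) :
    Set.BijOn R.extend t t := by
  refine ⟨fun d hd => ?_, fun d₁ _ d₂ _ h => ?_, fun d hd => ?_⟩
  · by_cases hd' : d ∈ G.darts
    · rw [R.extend_of_mem hd']
      exact ht (R.bij.mapsTo hd')
    · rwa [R.extend_of_notMem hd']
  · by_cases h₁ : d₁ ∈ G.darts <;> by_cases h₂ : d₂ ∈ G.darts <;>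
      simp only [R.extend_of_mem, R.extend_of_notMem, h₁, h₂, not_false_eq_true] at h
    · exact R.bij.injOn h₁ h₂ h
    · exact absurd (h ▸ R.bij.mapsTo h₁) h₂
    · exact absurd (h.symm ▸ R.bij.mapsTo h₂) h₁
    · exact h
  · by_cases hd' : d ∈ G.darts
    · obtain ⟨c, hc, rfl⟩ := R.bij.surjOn hd'
      exact ⟨c, ht hc, R.extend_of_mem hc⟩
    · exact ⟨d, hd, R.extend_of_notMem hd'⟩

lemma mapsTo_extend_dartsAt (R : Rot G) (w : ℕ) :
    Set.MapsTo R.extend (G.dartsAt w) (G.dartsAt w) := fun d hd =>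
  ⟨R.extend_of_mem hd.1 ▸ R.bij.mapsTo hd.1, (R.fst_extend d).trans hd.2⟩

lemma isCyclicOn_dartsAt (R : Rot G) (w : ℕ) : IsCyclicOn R.extend (G.dartsAt w) :=
  IsCyclicOn.congr (f := R.r) (fun d hd d' hd' => R.cyc d hd.1 d' hd'.1 (hd.2.trans hd'.2.symm))
    (fun d hd => ⟨R.bij.mapsTo hd.1, (R.fix d hd.1).trans hd.2⟩)
    (fun _ hd => (R.extend_of_mem hd.1).symm)

lemma mapsTo_compSwap_extend (R : Rot G) (hne : (u, v) ∉ G.darts) (hdu : G.IsSlot u v du) :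
    Set.MapsTo (compSwap R.extend du (u, v)) (insert (u, v) (G.dartsAt u))
      (insert (u, v) (G.dartsAt u)) := by
  refine mapsTo_compSwap ?_ ?_ (Set.mem_insert _ _)
  · rintro d (rfl | hd)
    · rw [R.extend_of_notMem hne]
      exact Set.mem_insert _ _
    · exact Or.inr (R.mapsTo_extend_dartsAt u hd)
  · rcases hdu with hdu | ⟨rfl, -⟩
    exacts [Or.inr hdu, Set.mem_insert _ _]

lemma isCyclicOn_compSwap_extend (R : Rot G) (hne : (u, v) ∉ G.darts) (hdu : G.IsSlot u v du) :
    IsCyclicOn (compSwap R.extend du (u, v)) (insert (u, v) (G.dartsAt u)) := by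
  rcases hdu with hdu | ⟨rfl, hu⟩
  · exact (R.isCyclicOn_dartsAt u).compSwap_insert (G.darts_finite.insert _)
      (R.bijOn_extend (Set.subset_insert _ _)) (fun d hd => Or.inr hd.1) hdu
      (Set.mem_insert _ _) (fun h => hne h.1) (R.extend_of_notMem hne)
  · have : G.dartsAt u = ∅ := Set.eq_empty_of_forall_notMem fun d hd =>
      hu (hd.2 ▸ hasDart_of_mem_darts hd.1)
    rw [this, compSwap_self, insert_empty_eq]
    exact isCyclicOn_singleton _ _

/-- `(u, v)` follows `du` in the rotation at `u`, and `(v, u)` follows `dv` in the one at `v`. -/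
noncomputable def insertRot (R : Rot G) (u v : ℕ) (du dv : ℕ × ℕ) : ℕ × ℕ → ℕ × ℕ :=
  compSwap (compSwap R.extend du (u, v)) dv (v, u)

lemma fst_insertRot (R : Rot G) (hdu : du.1 = u) (hdv : dv.1 = v) (d : ℕ × ℕ) :
    (R.insertRot u v du dv d).1 = d.1 := by
  unfold insertRot compSwap
  rw [R.fst_extend, fst_swap_apply _ hdu, fst_swap_apply _ hdv]

lemma insertRot_of_fst_eq_left (R : Rot G) (huv : u ≠ v) (hdv : dv.1 = v) (hd : d.1 = u) :
    R.insertRot u v du dv d = compSwap R.extend du (u, v) d := by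
  refine congrArg R.extend (congrArg (Equiv.swap du (u, v)) (swap_apply_of_fst_ne ?_ ?_))
  · rw [hd, hdv]
    exact huv
  · rw [hd]
    exact huv

lemma insertRot_of_fst_eq_right (R : Rot G) (huv : u ≠ v) (hdu : du.1 = u) (hdv : dv.1 = v)
    (hd : d.1 = v) : R.insertRot u v du dv d = compSwap R.extend dv (v, u) d := by
  have hd' : (Equiv.swap dv (v, u) d).1 = v := (fst_swap_apply d hdv).trans hd
  refine congrArg R.extend (swap_apply_of_fst_ne ?_ ?_)
  · rw [hd', hdu]
    exact Ne.symm huv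
  · rw [hd']
    exact Ne.symm huv

lemma insertRot_of_fst_ne (R : Rot G) (hdu : du.1 = u) (hdv : dv.1 = v) (hu : d.1 ≠ u)
    (hv : d.1 ≠ v) : R.insertRot u v du dv d = R.extend d := by
  unfold insertRot compSwap
  rw [swap_apply_of_fst_ne (a := dv) (b := (v, u)) (by rwa [hdv]) hv,
    swap_apply_of_fst_ne (a := du) (b := (u, v)) (by rwa [hdu]) hu]

lemma bijOn_insertRot (R : Rot G) (hdu : G.IsSlot u v du) (hdv : G.IsSlot v u dv) :
    Set.BijOn (R.insertRot u v du dv) (G.dartsWith u v) (G.dartsWith u v) :=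
  bijOn_compSwap (bijOn_compSwap (R.bijOn_extend (darts_subset_dartsWith G u v))
    hdu.mem_dartsWith (mem_dartsWith_left G u v))
    (dartsWith_comm G u v ▸ hdv.mem_dartsWith) (mem_dartsWith_right G u v)

lemma isCyclicOn_insertRot (R : Rot G) (hne : s(u, v) ∉ G.edges) (huv : u ≠ v)
    (hdu : G.IsSlot u v du) (hdv : G.IsSlot v u dv) (w : ℕ) :
    IsCyclicOn (R.insertRot u v du dv) {d ∈ G.dartsWith u v | d.1 = w} := by
  have hne' : (v, u) ∉ G.darts := swap_notMem_darts hne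
  have hfst {x : ℕ} {e : ℕ × ℕ} (he : e.1 = x) {d : ℕ × ℕ} (hd : d ∈ insert e (G.dartsAt x)) :
      d.1 = x := by
    rcases hd with rfl | hd
    exacts [he, hd.2]
  by_cases hwu : w = u
  · subst hwu
    rw [sep_fst_dartsWith_self huv]
    exact (R.isCyclicOn_compSwap_extend hne hdu).congr (R.mapsTo_compSwap_extend hne hdu)
      fun d hd => (R.insertRot_of_fst_eq_left huv hdv.fst (hfst rfl hd)).symm
  by_cases hwv : w = v
  · subst hwv
    rw [dartsWith_comm, sep_fst_dartsWith_self (Ne.symm huv)]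
    exact (R.isCyclicOn_compSwap_extend hne' hdv).congr (R.mapsTo_compSwap_extend hne' hdv)
      fun d hd => (R.insertRot_of_fst_eq_right huv hdu.fst hdv.fst (hfst rfl hd)).symm
  · rw [sep_fst_dartsWith_of_ne hwu hwv]
    exact (R.isCyclicOn_dartsAt w).congr (R.mapsTo_extend_dartsAt w)
      fun d hd => (R.insertRot_of_fst_ne hdu.fst hdv.fst (hd.2 ▸ hwu) (hd.2 ▸ hwv)).symm

noncomputable def insertEdge {hu : u ∈ G.verts} {hv : v ∈ G.verts} {huv : u ≠ v} (R : Rot G)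
    (hne : s(u, v) ∉ G.edges) (hdu : G.IsSlot u v du)
    (hdv : G.IsSlot v u dv) : Rot (G.addE u v hu hv huv) where
  r := R.insertRot u v du dv
  bij := darts_addE ▸ R.bijOn_insertRot hdu hdv
  fix d _ := R.fst_insertRot hdu.fst hdv.fst d
  cyc d hd d' hd' h := R.isCyclicOn_insertRot hne huv hdu hdv d.1 d
    ⟨darts_addE ▸ hd, rfl⟩ d' ⟨darts_addE ▸ hd', h.symm⟩

end Rot

namespace Rot

open FinGraph

variable {G : FinGraph} {u v : ℕ} {hu : u ∈ G.verts} {hv : v ∈ G.verts} {huv : u ≠ v}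
  {d du dv : ℕ × ℕ}

noncomputable def extendFace (R : Rot G) : ℕ × ℕ → ℕ × ℕ := fun d => R.extend d.swap

lemma faceMap_insertEdge (R : Rot G) (hne : s(u, v) ∉ G.edges) (hdu : G.IsSlot u v du)
    (hdv : G.IsSlot v u dv) :
    faceMap (R.insertEdge (hu := hu) (hv := hv) (huv := huv) hne hdu hdv) =
      compSwap (compSwap R.extendFace du.swap (v, u)) dv.swap (u, v) := by
  funext d
  show R.extend (Equiv.swap du (u, v) (Equiv.swap dv (v, u) d.swap)) =
    R.extend (Equiv.swap du.swap (v, u) (Equiv.swap dv.swap (u, v) d)).swap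
  rw [prod_swap_swap_apply, prod_swap_swap_apply, Prod.swap_swap, Prod.swap_swap]
  rfl

lemma bijOn_extendFace (R : Rot G) (u v : ℕ) :
    Set.BijOn R.extendFace (G.dartsWith u v) (G.dartsWith u v) :=
  (R.bijOn_extend (darts_subset_dartsWith G u v)).comp
    ⟨fun _ => swap_mem_dartsWith, Prod.swap_injective.injOn,
      fun d hd => ⟨d.swap, swap_mem_dartsWith hd, Prod.swap_swap d⟩⟩

lemma orb_extendFace_of_mem (R : Rot G) (hd : d ∈ G.darts) :
    orb R.extendFace d = orb (faceMap R) d :=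
  (orb_congr (bijOn_faceMap R).mapsTo
    (fun _ hd' => (R.extend_of_mem (swap_mem_darts hd')).symm) hd).symm

lemma orb_extendFace_new (R : Rot G) (hne : s(u, v) ∉ G.edges) :
    orb R.extendFace (u, v) = {(u, v), (v, u)} :=
  orb_eq_pair (R.extend_of_notMem (swap_notMem_darts hne)) (R.extend_of_notMem hne)

lemma ncard_orbs_extendFace (R : Rot G) (hne : s(u, v) ∉ G.edges) :
    (orbs R.extendFace (G.dartsWith u v)).ncard = (orbs (faceMap R) G.darts).ncard + 1 := by
  have hne' : s(v, u) ∉ G.edges := swap_notMem_darts hne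
  have horbs : orbs R.extendFace (G.dartsWith u v) =
      insert {(u, v), (v, u)} (orbs (faceMap R) G.darts) := by
    ext S
    constructor
    · rintro ⟨d, (rfl | rfl | hd), rfl⟩
      · exact Or.inl (R.orb_extendFace_new hne)
      · exact Or.inl ((R.orb_extendFace_new hne').trans (Set.pair_comm _ _))
      · exact Or.inr ⟨d, hd, R.orb_extendFace_of_mem hd⟩
    · rintro (rfl | ⟨d, hd, rfl⟩)
      · exact ⟨(u, v), mem_dartsWith_left G u v, (R.orb_extendFace_new hne).symm⟩
      · exact ⟨d, darts_subset_dartsWith G u v hd, (R.orb_extendFace_of_mem hd).symm⟩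
  have hnotin : {(u, v), (v, u)} ∉ orbs (faceMap R) G.darts := by
    rintro ⟨d, hd, hS⟩
    exact hne (orb_subset (bijOn_faceMap R).mapsTo hd (hS ▸ Set.mem_insert _ _))
  rw [horbs, Set.ncard_insert_of_notMem hnotin (orbs_finite G.darts_finite)]

/-- A dart `a` stands for the corner at `a.2` between `a` and `faceMap R a`. -/
def SameFace (R : Rot G) (a b : ℕ × ℕ) : Prop :=
  a ∈ G.darts ∧ b ∈ G.darts ∧ b ∈ orb (faceMap R) a

lemma orb_compSwap_extendFace (R : Rot G) (hne : s(u, v) ∉ G.edges) (hdu : du ∈ G.darts) :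
    orb (compSwap R.extendFace du.swap (v, u)) du.swap =
      orb (faceMap R) du.swap ∪ {(v, u), (u, v)} := by
  have hA := swap_mem_darts hdu
  have hne' : s(v, u) ∉ G.edges := swap_notMem_darts hne
  rw [orb_compSwap_of_notMem (G.dartsWith_finite u v) (R.bijOn_extendFace u v)
    (mem_dartsWith_right G u v), R.orb_extendFace_of_mem hA, R.orb_extendFace_new hne']
  rw [R.orb_extendFace_of_mem hA]
  exact fun h => hne' (orb_subset (bijOn_faceMap R).mapsTo hA h)

lemma mem_orb_compSwap_extendFace_iff (R : Rot G) (hne : s(u, v) ∉ G.edges)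
    (hdu : G.IsSlot u v du) (hdv : dv ∈ G.darts) :
    (u, v) ∈ orb (compSwap R.extendFace du.swap (v, u)) dv.swap ↔
      R.SameFace du.swap dv.swap := by
  have hfin := G.dartsWith_finite u v
  have hB := swap_mem_darts hdv
  rcases hdu with hdu | ⟨rfl, -⟩
  · have hA := swap_mem_darts hdu.1
    have hF1 := bijOn_compSwap (R.bijOn_extendFace u v)
      (darts_subset_dartsWith G u v hA) (mem_dartsWith_right G u v)
    have hmerge := R.orb_compSwap_extendFace hne hdu.1
    have heA : orb (compSwap R.extendFace du.swap (v, u)) (u, v) =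
        orb (compSwap R.extendFace du.swap (v, u)) du.swap :=
      orb_eq_of_mem hfin hF1 (darts_subset_dartsWith G u v hA) (hmerge ▸ Or.inr (Or.inr rfl))
    have hBe : dv.swap ∉ ({(v, u), (u, v)} : Set (ℕ × ℕ)) := by
      rintro (h | h)
      · exact swap_notMem_darts hne (h ▸ hB)
      · exact (show (u, v) ∉ G.darts from hne) (h ▸ hB)
    constructor
    · intro h
      have h' := mem_orb_comm hfin hF1 (darts_subset_dartsWith G u v hB) h
      rw [heA, hmerge] at h'
      exact ⟨hA, hB, h'.resolve_right hBe⟩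
    · rintro ⟨-, -, h⟩
      refine mem_orb_comm hfin hF1 (mem_dartsWith_left G u v) ?_
      rw [heA, hmerge]
      exact Or.inl h
  · rw [show ((u, v) : ℕ × ℕ).swap = (v, u) from rfl, compSwap_self, R.orb_extendFace_of_mem hB]
    exact ⟨fun h => absurd (orb_subset (bijOn_faceMap R).mapsTo hB h) hne,
      fun h => (swap_notMem_darts hne h.1).elim⟩

lemma ncard_orbs_compSwap_extendFace (R : Rot G) (hne : s(u, v) ∉ G.edges)
    (hdu : G.IsSlot u v du) :
    ((orbs (compSwap R.extendFace du.swap (v, u)) (G.dartsWith u v)).ncard : ℤ) +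
      (if G.HasDart u then 1 else 0) = (orbs (faceMap R) G.darts).ncard + 1 := by
  have h₀ := R.ncard_orbs_extendFace hne
  rw [← hdu.mem_darts_iff]
  rcases hdu with hdu | ⟨rfl, -⟩
  · have hA := swap_mem_darts hdu.1
    have hnot : (v, u) ∉ orb R.extendFace du.swap := by
      rw [R.orb_extendFace_of_mem hA]
      exact fun h => swap_notMem_darts hne (orb_subset (bijOn_faceMap R).mapsTo hA h)
    rw [ncard_orbs_compSwap (G.dartsWith_finite u v) (R.bijOn_extendFace u v)
      (darts_subset_dartsWith G u v hA) (mem_dartsWith_right G u v)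
      (fun h => swap_notMem_darts hne (h ▸ hA)), if_neg hnot, if_pos hdu.1, h₀]
    push_cast
    ring
  · rw [if_neg (show (u, v) ∉ G.darts from hne), show ((u, v) : ℕ × ℕ).swap = (v, u) from rfl,
      compSwap_self, h₀]
    push_cast
    ring

lemma ncard_orbs_faceMap_insertEdge (R : Rot G) (hne : s(u, v) ∉ G.edges)
    (hdu : G.IsSlot u v du) (hdv : G.IsSlot v u dv) :
    ((orbs (faceMap (R.insertEdge (hu := hu) (hv := hv) (huv := huv) hne hdu hdv))
        (G.addE u v hu hv huv).darts).ncard : ℤ) +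
        (if G.HasDart u then 1 else 0) + (if G.HasDart v then 1 else 0) =
      (orbs (faceMap R) G.darts).ncard + 1 + if R.SameFace du.swap dv.swap then 2 else 0 := by
  have h₁ := R.ncard_orbs_compSwap_extendFace hne hdu
  rw [darts_addE, faceMap_insertEdge, ← hdv.mem_darts_iff]
  rcases hdv with hdv | ⟨rfl, -⟩
  · have hB := swap_mem_darts hdv.1
    have hF1 := bijOn_compSwap (R.bijOn_extendFace u v) (swap_mem_dartsWith hdu.mem_dartsWith)
      (mem_dartsWith_right G u v)
    rw [ncard_orbs_compSwap (G.dartsWith_finite u v) hF1 (darts_subset_dartsWith G u v hB)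
      (mem_dartsWith_left G u v) (fun h => (show (u, v) ∉ G.darts from hne) (h ▸ hB)),
      if_pos hdv.1, R.mem_orb_compSwap_extendFace_iff hne hdu hdv.1]
    split_ifs at h₁ ⊢ <;> linarith
  · rw [show ((v, u) : ℕ × ℕ).swap = (u, v) from rfl, compSwap_self,
      if_neg (swap_notMem_darts hne),
      if_neg (show ¬ R.SameFace du.swap (u, v) from fun h => hne h.2.1)]
    linarith

lemma eulerVal_insertEdge (R : Rot G) (hne : s(u, v) ∉ G.edges) (hdu : G.IsSlot u v du)
    (hdv : G.IsSlot v u dv) :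
    eulerVal _ (R.insertEdge (hu := hu) (hv := hv) (huv := huv) hne hdu hdv) =
      eulerVal G R + if G.Reach u v ∧ ¬ R.SameFace du.swap dv.swap then 2 else 0 := by
  have hc := G.compCount_addE (hu := hu) (hv := hv) (huv := huv)
  have hi : ((G.addE u v hu hv huv).isolCount : ℤ) + 2 =
      G.isolCount + (if G.HasDart u then 1 else 0) + (if G.HasDart v then 1 else 0) := by
    exact_mod_cast G.isolCount_addE
  have hm := G.card_edges_addE (hu := hu) (hv := hv) (huv := huv) hne
  have hf := R.ncard_orbs_faceMap_insertEdge (hu := hu) (hv := hv) (huv := huv) hne hdu hdv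
  have hsame : R.SameFace du.swap dv.swap → G.Reach u v := fun ⟨hA, _, h⟩ => by
    simpa [hdu.fst, hdv.fst] using reach_of_mem_orb_faceMap R hA h
  rw [eulerVal_eq, eulerVal_eq, show (G.addE u v hu hv huv).verts = G.verts from rfl]
  by_cases hs : R.SameFace du.swap dv.swap
  · simp only [hsame hs, hs, if_true, not_true_eq_false, and_false, if_false] at hc hf ⊢
    omega
  · by_cases hr : G.Reach u v <;>
      simp only [hr, hs, if_true, if_false, not_false_eq_true, and_true] at hc hf ⊢ <;>
      omega

end Rot

namespace FinGraph

variable {G : FinGraph} {u v : ℕ} {hu : u ∈ G.verts} {hv : v ∈ G.verts} {huv : u ≠ v}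

lemma exists_rot_eulerVal_eq_zero_of_edges_eq_empty (h : G.edges = ∅) :
    ∃ R : Rot G, eulerVal G R = 0 := by
  have hdarts : G.darts = ∅ := Set.eq_empty_of_forall_notMem fun d hd => by
    simp [darts, h] at hd
  let R : Rot G := ⟨id, hdarts ▸ Set.bijOn_empty id, by simp [hdarts], by simp [hdarts]⟩
  refine ⟨R, ?_⟩
  have horbs : orbs (faceMap R) G.darts = ∅ :=
    Set.eq_empty_of_forall_notMem fun _ ⟨d, hd, _⟩ => by rwa [hdarts] at hd
  have hcomp : G.comp = fun v => {v} := by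
    funext v
    ext q
    refine ⟨fun hq => ?_, fun hq => hq ▸ Relation.ReflTransGen.refl⟩
    rcases Relation.ReflTransGen.cases_head hq with rfl | ⟨c, hc, -⟩
    exacts [rfl, absurd hc (by simp [Adj, h])]
  have hisol : G.isolCount = G.verts.card := by
    unfold isolCount
    rw [Finset.filter_true_of_mem fun w _ e he => absurd he (by simp [h])]
  rw [eulerVal_eq, compCount_eq, hcomp, Set.ncard_image_of_injective _ Set.singleton_injective,
    Set.ncard_coe_finset, hisol, h, horbs, Set.ncard_empty, Finset.card_empty]
  push_cast
  ring

lemma exists_rot_eulerVal_eq_two_mul (G : FinGraph) :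
    ∃ (R : Rot G) (k : ℕ), eulerVal G R = 2 * k := by
  induction hn : G.edges.card generalizing G with
  | zero =>
    obtain ⟨R, hR⟩ := exists_rot_eulerVal_eq_zero_of_edges_eq_empty (Finset.card_eq_zero.mp hn)
    exact ⟨R, 0, by simpa using hR⟩
  | succ n ih =>
    obtain ⟨e, he⟩ := Finset.card_pos.mp (by omega : 0 < G.edges.card)
    induction e using Sym2.ind with
    | _ p q =>
    have hpq : p ≠ q := fun h => G.loopless _ he (by rw [h]; exact Sym2.mk_isDiag_iff.mpr rfl)
    have hp : p ∈ (G.del p q).verts := G.edge_sub _ he _ (Sym2.mem_mk_left _ _)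
    have hq : q ∈ (G.del p q).verts := G.edge_sub _ he _ (Sym2.mem_mk_right _ _)
    have hne : s(p, q) ∉ (G.del p q).edges := Finset.notMem_erase _ _
    have hG : (G.del p q).addE p q hp hq hpq = G := ext_of_verts_edges rfl (Finset.insert_erase he)
    obtain ⟨R, k, hR⟩ := ih (G.del p q) (by simp [del, Finset.card_erase_of_mem he, hn])
    obtain ⟨dp, hdp⟩ := (G.del p q).exists_isSlot p q
    obtain ⟨dq, hdq⟩ := (G.del p q).exists_isSlot q p
    rw [← hG]
    refine ⟨R.insertEdge hne hdp hdq, ?_⟩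
    rw [R.eulerVal_insertEdge, hR]
    split_ifs
    exacts [⟨k + 1, by push_cast; ring⟩, ⟨k, by ring⟩]

lemma genus_spec (G : FinGraph) : ∃ R : Rot G, 2 * (G.genus : ℤ) = eulerVal G R := by
  obtain ⟨R, k, hR⟩ := G.exists_rot_eulerVal_eq_two_mul
  exact Nat.sInf_mem (s := {k : ℕ | ∃ R : Rot G, 2 * (k : ℤ) = eulerVal G R}) ⟨k, R, hR.symm⟩

lemma genus_le_of_eulerVal_eq {k : ℕ} (R : Rot G) (h : eulerVal G R = 2 * k) : G.genus ≤ k :=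
  Nat.sInf_le ⟨R, h.symm⟩

lemma genus_addE_le (hne : s(u, v) ∉ G.edges) : (G.addE u v hu hv huv).genus ≤ G.genus + 1 := by
  obtain ⟨R, hR⟩ := G.genus_spec
  obtain ⟨du, hdu⟩ := G.exists_isSlot u v
  obtain ⟨dv, hdv⟩ := G.exists_isSlot v u
  have h := R.eulerVal_insertEdge (hu := hu) (hv := hv) (huv := huv) hne hdu hdv
  rw [← hR] at h
  split_ifs at h
  · exact genus_le_of_eulerVal_eq _ (by rw [h]; push_cast; ring)
  · exact (genus_le_of_eulerVal_eq _ (by rw [h, add_zero])).trans (Nat.le_succ _)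

lemma genus_addE_le_of_sameFace (hne : s(u, v) ∉ G.edges) (R : Rot G)
    (hR : 2 * (G.genus : ℤ) = eulerVal G R) {a b : ℕ × ℕ} (hab : R.SameFace a b) (ha : a.2 = u)
    (hb : b.2 = v) : (G.addE u v hu hv huv).genus ≤ G.genus := by
  have hdu : G.IsSlot u v a.swap := Or.inl ⟨swap_mem_darts hab.1, ha⟩
  have hdv : G.IsSlot v u b.swap := Or.inl ⟨swap_mem_darts hab.2.1, hb⟩
  refine genus_le_of_eulerVal_eq (R.insertEdge hne hdu hdv) ?_
  rw [R.eulerVal_insertEdge, Prod.swap_swap, Prod.swap_swap, if_neg (fun h => h.2 hab), add_zero,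
    hR]

end FinGraph

lemma TGraph.plus_G_eq_addE (G : TGraph) : G.plus.G = G.G.addE G.x G.y G.hx G.hy G.hxy := rfl

lemma TGraph.plus_G_of_hasXY {G : TGraph} (h : G.HasXY) : G.plus.G = G.G :=
  FinGraph.ext_of_verts_edges rfl (Finset.insert_eq_self.mpr h)

lemma IsAlt.exists_sameFace {G : TGraph} {R : Rot G.G} (h : IsAlt G R) :
    ∃ a b, R.SameFace a b ∧ a.2 = G.x ∧ b.2 = G.y := by
  obtain ⟨d, hd, hdx, i, -, k, hi, -, -, hk, hiy, -, -⟩ := h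
  set F := faceMap R
  have hmem (n : ℕ) : F^[n] d ∈ G.G.darts := (bijOn_faceMap R).mapsTo.iterate n hd
  have hsnd (n : ℕ) : (F^[n] d).2 = (F^[n + 1] d).1 := by
    rw [Function.iterate_succ_apply', fst_faceMap R (hmem n)]
  refine ⟨F^[Function.minimalPeriod F d - 1] d, F^[i - 1] d, ⟨hmem _, hmem _, ?_⟩, ?_, ?_⟩
  · rw [orb_eq_of_mem G.G.darts_finite (bijOn_faceMap R) hd (iterate_mem_orb F d _)]
    exact iterate_mem_orb F d _
  · rw [hsnd, Nat.sub_add_cancel (by omega), Function.iterate_minimalPeriod, hdx]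
  · rw [hsnd, Nat.sub_add_cancel hi, hiy]

/-- Lemma (lm-galt-gp-sep): g⁺(G) ≤ g_a(G) + 1. -/
theorem gpP_le_gaP_add_one (G : TGraph) : gpP G ≤ gaP G + 1 := by
  unfold gpP gaP gP epsP
  by_cases hxy : G.HasXY
  · rw [TGraph.plus_G_of_hasXY hxy]
    split_ifs <;> omega
  · rw [G.plus_G_eq_addE]
    split_ifs with halt
    · obtain ⟨R, hR, hRalt⟩ := halt
      obtain ⟨a, b, hab, ha, hb⟩ := hRalt.exists_sameFace
      have := FinGraph.genus_addE_le_of_sameFace (hu := G.hx) (hv := G.hy) (huv := G.hxy) hxy R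
        hR hab ha hb
      omega
    · have := FinGraph.genus_addE_le (hu := G.hx) (hv := G.hy) (huv := G.hxy) hxy
      omega
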